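/- Let φ be a Schwartz function on ℝ with φ ≥ 0, ∫ φ(y) dy = 1, and Fourier transform φ̂ compactly supported with φ̂(p) = 0 whenever |p| ≥ ρ_φ for some ρ_φ > 0. For L ∈ ℕ and R > 0 define the lattice averaging kernel ϕ(ξ) := R^{−1} Σ_{n∈ℤ} φ((ξ − Ln)/R), ξ ∈ ℝ. If R ≥ ρ_φ, then Σ_{x∈Λ_L} ϕ(ξ + x) = 1 for every ξ ∈ ℝ. -/

import Mathlib

open Real MeasureTheory

/-- The discrete circle of `L` sites, represented by integers:
`{−(L−1)/2, …, (L−1)/2}` for odd `L` and `{−L/2+1, …, L/2}` for even `L`. -/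
noncomputable def Lambda (L : ℕ) : Finset ℤ := Finset.Ioc ((L : ℤ) / 2 - L) ((L : ℤ) / 2)

/-- The lattice averaging kernel `ϕ(ξ) = R⁻¹ Σ_{n∈ℤ} φ((ξ − Ln)/R)`. -/
noncomputable def latticeKernel (φ : SchwartzMap ℝ ℝ) (L R : ℝ) (ξ : ℝ) : ℝ :=
  R⁻¹ * ∑' n : ℤ, φ ((ξ - L * n) / R)

/-- The Fourier transform `φ̂(p) = ∫ φ(y) e^{−2πipy} dy`. -/
noncomputable def fourierHat (φ : SchwartzMap ℝ ℝ) (p : ℝ) : ℂ :=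
  ∫ y : ℝ, (φ y : ℂ) * Complex.exp (-(2 * π * p * y) * Complex.I)

/-!
Poisson summation turns `∑ₙ φ((ξ + n)/R)` into `∑ₙ R φ̂(R n) e^{2πinξ}`. Since `φ̂` vanishes
outside `(-ρ, ρ)` and `ρ ≤ R`, only the term `n = 0` survives, and it equals `R ∫ φ = R`.
The sum of the kernel over `Λ_L` is `R⁻¹` times this series, because `(x, n) ↦ x - L n` maps
`Λ_L × ℤ` bijectively onto `ℤ`.
-/

open SchwartzMap FourierTransform

def Int.iocProdEquiv (a : ℤ) {L : ℤ} (hL : 0 < L) : {x // x ∈ Finset.Ioc (a - L) a} × ℤ ≃ ℤ where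
  toFun p := p.1 - L * p.2
  invFun m := (⟨a - (a - m) % L, by
      have := Int.emod_nonneg (a - m) hL.ne'
      have := Int.emod_lt_of_pos (a - m) hL
      rw [Finset.mem_Ioc]; omega⟩, (a - m) / L)
  left_inv := by
    rintro ⟨⟨x, hx⟩, n⟩
    rw [Finset.mem_Ioc] at hx
    have hrepr : a - (x - L * n) = a - x + L * n := by ring
    have hmod : (a - x) % L = a - x := Int.emod_eq_of_lt (by omega) (by omega)
    have hdiv : (a - x) / L = 0 := Int.ediv_eq_zero_of_lt (by omega) (by omega)
    ext
    · simp only [hrepr, Int.add_mul_emod_self_left, hmod]; omega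
    · simp only [hrepr, Int.add_mul_ediv_left _ _ hL.ne', hdiv, zero_add]
  right_inv m := by
    have := Int.mul_ediv_add_emod (a - m) L
    dsimp only
    omega

theorem HasSum.sum_Ioc_tsum_sub_mul {E : Type*} [NormedAddCommGroup E] [CompleteSpace E]
    {f : ℤ → E} {s : E} (hf : HasSum f s) (a : ℤ) {L : ℤ} (hL : 0 < L) :
    ∑ x ∈ Finset.Ioc (a - L) a, ∑' n : ℤ, f (x - L * n) = s := by
  have hfe := (Int.iocProdEquiv a hL).hasSum_iff.mpr hf
  rw [← Finset.tsum_subtype]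
  exact (hfe.prod_fiberwise fun x => (hfe.summable.prod_factor x).hasSum).tsum_eq

theorem Real.fourier_comp_div {E : Type*} [NormedAddCommGroup E] [NormedSpace ℂ E]
    (f : ℝ → E) {R : ℝ} (hR : R ≠ 0) (w : ℝ) : 𝓕 (fun x => f (x / R)) w = |R| • 𝓕 f (R * w) := by
  simp only [Real.fourier_real_eq]
  rw [← Measure.integral_comp_div (fun v => 𝐞 (-(v * (R * w))) • f v) R]
  congr! 4 with v
  field_simp

namespace SchwartzMap

variable {F : Type*} [NormedAddCommGroup F] [NormedSpace ℝ F]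

theorem summable_comp_add_intCast [CompleteSpace F] (f : 𝓢(ℝ, F)) (x : ℝ) :
    Summable fun n : ℤ => f (x + n) := by
  have hdecay := ((f.compSubConstCLM ℝ (-x)).isBigO_cocompact_rpow (-2)).comp_tendsto
    Int.tendsto_coe_cofinite
  refine summable_of_isBigO (Real.summable_abs_int_rpow one_lt_two) ?_
  simpa [add_comm, Function.comp_def] using hdecay

theorem hasSum_comp_add_intCast_of_fourier_eq_zero (f : 𝓢(ℝ, ℂ))
    (hf : ∀ n : ℤ, n ≠ 0 → 𝓕 f n = 0) (x : ℝ) : HasSum (fun n : ℤ => f (x + n)) (𝓕 f 0) := by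
  rw [(f.summable_comp_add_intCast x).hasSum_iff, f.tsum_eq_tsum_fourier x,
    tsum_eq_single 0 fun n hn => by rw [hf n hn, zero_mul]]
  simp

noncomputable def ofReal (f : 𝓢(ℝ, ℝ)) : 𝓢(ℝ, ℂ) :=
  bilinLeftCLM (ContinuousLinearMap.lsmul ℝ ℝ : ℝ →L[ℝ] ℂ →L[ℝ] ℂ)
    (Function.HasTemperateGrowth.const (1 : ℂ)) f

@[simp]
theorem ofReal_apply (f : 𝓢(ℝ, ℝ)) (x : ℝ) : f.ofReal x = f x := by
  simp [ofReal, Complex.real_smul]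

noncomputable def dilate (f : 𝓢(ℝ, F)) {R : ℝ} (hR : R ≠ 0) : 𝓢(ℝ, F) :=
  compCLMOfContinuousLinearEquiv ℝ
    (ContinuousLinearEquiv.unitsEquivAut ℝ (Units.mk0 R⁻¹ (inv_ne_zero hR))) f

@[simp]
theorem dilate_apply (f : 𝓢(ℝ, F)) {R : ℝ} (hR : R ≠ 0) (x : ℝ) : f.dilate hR x = f (x / R) := by
  simp [dilate, div_eq_mul_inv]

end SchwartzMap

theorem fourierHat_eq_fourier_ofReal (φ : 𝓢(ℝ, ℝ)) (p : ℝ) : fourierHat φ p = 𝓕 φ.ofReal p := by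
  rw [fourier_coe, Real.fourier_real_eq_integral_exp_smul, fourierHat]
  congr 1 with y
  rw [ofReal_apply, smul_eq_mul, mul_comm]
  push_cast
  ring_nf

theorem fourierHat_zero (φ : 𝓢(ℝ, ℝ)) : fourierHat φ 0 = ∫ y, φ y := by
  simp [fourierHat, integral_complex_ofReal]

theorem fourier_dilate_ofReal (φ : 𝓢(ℝ, ℝ)) {R : ℝ} (hR : 0 < R) (w : ℝ) :
    𝓕 (φ.ofReal.dilate hR.ne') w = R * fourierHat φ (R * w) := by
  have hcoe : ⇑(φ.ofReal.dilate hR.ne') = fun x => φ.ofReal (x / R) := funext (dilate_apply _ _)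
  rw [fourier_coe, hcoe, Real.fourier_comp_div _ hR.ne', fourierHat_eq_fourier_ofReal,
    fourier_coe, abs_of_pos hR, Complex.real_smul]

theorem hasSum_comp_div_of_fourierHat_eq_zero (φ : 𝓢(ℝ, ℝ)) {ρ R : ℝ} (hρ : 0 < ρ) (hR : ρ ≤ R)
    (hsupp : ∀ p : ℝ, ρ ≤ |p| → fourierHat φ p = 0) (ξ : ℝ) :
    HasSum (fun n : ℤ => φ ((ξ + n) / R)) (R * ∫ y, φ y) := by
  have hR0 : 0 < R := hρ.trans_le hR
  have hvanish : ∀ n : ℤ, n ≠ 0 → 𝓕 (φ.ofReal.dilate hR0.ne') n = 0 := fun n hn => by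
    have hn1 : (1 : ℝ) ≤ |(n : ℝ)| := by exact_mod_cast Int.one_le_abs hn
    rw [fourier_dilate_ofReal φ hR0, hsupp, mul_zero]
    rw [abs_mul, abs_of_pos hR0]
    exact hR.trans (le_mul_of_one_le_right hR0.le hn1)
  have hpoisson := (φ.ofReal.dilate hR0.ne').hasSum_comp_add_intCast_of_fourier_eq_zero hvanish ξ
  rw [fourier_dilate_ofReal φ hR0, mul_zero, fourierHat_zero] at hpoisson
  simpa only [dilate_apply, ofReal_apply, ← Complex.ofReal_mul, Complex.hasSum_ofReal] using hpoisson

theorem latticeKernel_lattice_normalization_general (φ : SchwartzMap ℝ ℝ)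
    (hnorm : ∫ y : ℝ, φ y = 1)
    (ρ : ℝ) (hρ : 0 < ρ)
    (hsupp : ∀ p : ℝ, ρ ≤ |p| → fourierHat φ p = 0)
    (L : ℕ) (hL : 0 < L) (R : ℝ) (hR : ρ ≤ R) :
    ∀ ξ : ℝ, ∑ x ∈ Lambda L, latticeKernel φ L R (ξ + x) = 1 := by
  intro ξ
  have hsum := hasSum_comp_div_of_fourierHat_eq_zero φ hρ hR hsupp ξ
  rw [hnorm, mul_one] at hsum
  calc ∑ x ∈ Lambda L, latticeKernel φ L R (ξ + x)
      = R⁻¹ * ∑ x ∈ Lambda L, ∑' n : ℤ, φ ((ξ + ↑(x - L * n)) / R) := by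
        simp only [latticeKernel, Finset.mul_sum]
        refine Finset.sum_congr rfl fun x _ => congr_arg _ (tsum_congr fun n => ?_)
        push_cast
        ring_nf
    _ = R⁻¹ * R := by rw [Lambda, hsum.sum_Ioc_tsum_sub_mul _ (by exact_mod_cast hL)]
    _ = 1 := inv_mul_cancel₀ (hρ.trans_le hR).ne'

/-- If `R ≥ ρ_φ` then the lattice averaging kernel satisfies the lattice
normalization `Σ_{x∈Λ_L} ϕ(ξ + x) = 1` for every `ξ ∈ ℝ`. -/
theorem latticeKernel_lattice_normalization (φ : SchwartzMap ℝ ℝ)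
    (hpos : ∀ y : ℝ, 0 ≤ φ y)
    (hnorm : ∫ y : ℝ, φ y = 1)
    (ρ : ℝ) (hρ : 0 < ρ)
    (hsupp : ∀ p : ℝ, ρ ≤ |p| → fourierHat φ p = 0)
    (L : ℕ) (hL : 0 < L) (R : ℝ) (hR : ρ ≤ R) :
    ∀ ξ : ℝ, ∑ x ∈ Lambda L, latticeKernel φ L R (ξ + x) = 1 :=
  latticeKernel_lattice_normalization_general φ hnorm ρ hρ hsupp L hL R hR
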